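/- arXiv:2603.17365 — 3 statements merged into one kernel-verified Lean document; each statement's English description precedes it below -/
import Mathlib

section
/- Let ψ ~ N(0,C) with C = β⁻¹G_U be the discrete Gaussian free field on the grid U, let h:U→(0,∞), and let h̃ = ξ^sw_γ ⊙ h with the sample-wise gate. Then the expected intrinsic energy satisfies exactly 𝔼[𝓔_int(log h̃)] = 𝓔_int(log h) + γ²·ε_int, where ε_int = 𝔼[𝓔_int(ψ)] = (1/2)·Tr(L_int C). -/
open MeasureTheory Matrix Real

noncomputable section
/-- A point of the `H × W` feature grid `U = {1,…,H} × {1,…,W}` (0-indexed model). -/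
abbrev GridPt (H W : ℕ) := Fin H × Fin W

/-- Embedding of the grid into `ℤ × ℤ` with coordinates in `{1,…,H} × {1,…,W}`. -/
def gridZ {H W : ℕ} (x : GridPt H W) : ℤ × ℤ := ((x.1 : ℤ) + 1, (x.2 : ℤ) + 1)

/-- Nearest-neighbor adjacency on `ℤ × ℤ`: `ℓ¹`-distance one. -/
def adjZ (p q : ℤ × ℤ) : Bool := |p.1 - q.1| + |p.2 - q.2| == 1

/-- The Dirichlet Laplacian matrix on the grid `U` with edge weights `c` and zero
(auxiliary Dirichlet) boundary: `(L_U φ)(x) = ∑_{y : {x,y} ∈ E} c_{xy} (φ(x) − φ̄(y))`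
where `φ̄` extends `φ` by zero outside `U`. -/
def dirichletLap (H W : ℕ) (c : ℤ × ℤ → ℤ × ℤ → ℝ) :
    Matrix (GridPt H W) (GridPt H W) ℝ := fun x y =>
  if x = y then
    ((([((1 : ℤ), (0 : ℤ)), (-1, 0), (0, 1), (0, -1)] : List (ℤ × ℤ)).map
      (fun d => c (gridZ x) (gridZ x + d))).sum)
  else if adjZ (gridZ x) (gridZ y) then -c (gridZ x) (gridZ y) else 0
/-- Intrinsic energy `𝓔_int(f) = (1/2) ∑_{{x,y} ∈ E_int} c_{xy} (f(x) − f(y))²`,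
written as `1/4` times the sum over ordered adjacent pairs in `U`. -/
def Eint {H W : ℕ} (c : ℤ × ℤ → ℤ × ℤ → ℝ) (f : GridPt H W → ℝ) : ℝ :=
  (1 / 4) * ∑ x : GridPt H W, ∑ y : GridPt H W,
    if adjZ (gridZ x) (gridZ y) then c (gridZ x) (gridZ y) * (f x - f y) ^ 2 else 0

/-- Intrinsic weighted degree `d_x^int = ∑_{y : {x,y} ∈ E_int} c_{xy}`. -/
def dInt {H W : ℕ} (c : ℤ × ℤ → ℤ × ℤ → ℝ) (x : GridPt H W) : ℝ :=
  ∑ y : GridPt H W, if adjZ (gridZ x) (gridZ y) then c (gridZ x) (gridZ y) else 0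

/-- Interior (intrinsic) graph Laplacian `L_int` on `U`, with no boundary term. -/
def Lint (H W : ℕ) (c : ℤ × ℤ → ℤ × ℤ → ℝ) :
    Matrix (GridPt H W) (GridPt H W) ℝ := fun x y =>
  if x = y then dInt c x
  else if adjZ (gridZ x) (gridZ y) then -c (gridZ x) (gridZ y) else 0
/-- `ψ` is a centered Gaussian random vector with covariance matrix `C` under `P`:
every linear functional of `ψ` is a centered real Gaussian with the induced variance. -/
def IsCenteredGaussianField {ι : Type*} [Fintype ι] {Ω : Type*} [MeasurableSpace Ω]
    (P : MeasureTheory.Measure Ω) (ψ : Ω → ι → ℝ) (C : Matrix ι ι ℝ) : Prop :=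
  ∀ a : ι → ℝ,
    MeasureTheory.Measure.map (fun ω => ∑ x, a x * ψ ω x) P =
      ProbabilityTheory.gaussianReal 0 (∑ x, ∑ y, a x * C x y * a y).toNNReal

/-- Sample-wise mean-one gate `ξ^sw_γ(x) = exp(γψ(x)) / ((1/|U|) ∑_y exp(γψ(y)))`. -/
def swGate {ι : Type*} [Fintype ι] (γ : ℝ) (ψ : ι → ℝ) (x : ι) : ℝ :=
  Real.exp (γ * ψ x) / ((∑ y : ι, Real.exp (γ * ψ y)) / (Fintype.card ι : ℝ))

/-! The gate multiplies `h` by `exp (γψ)` and divides by a normalisation that depends on the sample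
but not on the site, so `log h̃ = log h + γψ - const` and the constant is invisible to the energy.
With `𝓔_int(f) = ½⟨f, L_int f⟩` the energy of `log h + γψ` splits into `𝓔_int(log h)`,
`γ² 𝓔_int(ψ)` and the cross term `γ⟨L_int log h, ψ⟩`, a centered Gaussian with mean zero.
Polarization identifies `𝔼[ψ(x)ψ(y)] = C x y`, whence `𝔼⟨ψ, L_int ψ⟩ = Tr(L_int C)`.
The hypothesis only prescribes the variances `(aᵀCa).toNNReal`; they are the true ones because
`C` is positive semidefinite: the Dirichlet Laplacian is `L_int` plus the nonnegative diagonal of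
boundary edge weights. -/

open ProbabilityTheory

lemma Matrix.dotProduct_mulVec_eq_sum_sum {ι : Type*} [Fintype ι] (C : Matrix ι ι ℝ)
    (a b : ι → ℝ) : a ⬝ᵥ C *ᵥ b = ∑ x, ∑ y, a x * C x y * b y := by
  simp only [dotProduct, mulVec, Finset.mul_sum, mul_assoc]

lemma Matrix.dotProduct_mulVec_self_eq_sum {ι : Type*} [Fintype ι] [DecidableEq ι]
    (M : Matrix ι ι ℝ) (v : ι → ℝ) : v ⬝ᵥ M *ᵥ v = ∑ x, (Pi.single x 1 ⬝ᵥ v) * (M x ⬝ᵥ v) := by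
  simp only [single_one_dotProduct]
  rfl

lemma Matrix.sum_sum_mul_sub_sq {ι : Type*} [Fintype ι] [DecidableEq ι] {A : Matrix ι ι ℝ}
    (hA : A.IsSymm) (f : ι → ℝ) :
    ∑ x, ∑ y, A x y * (f x - f y) ^ 2 =
      2 * (f ⬝ᵥ (diagonal (fun x => ∑ y, A x y) - A) *ᵥ f) := by
  have hswap : ∑ x, ∑ y, A x y * f y ^ 2 = ∑ x, ∑ y, A x y * f x ^ 2 := by
    rw [Finset.sum_comm]
    simp_rw [hA.apply]
  have hexpand : ∑ x, ∑ y, A x y * (f x - f y) ^ 2 = ∑ x, ∑ y, A x y * f x ^ 2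
      + ∑ x, ∑ y, A x y * f y ^ 2 - 2 * ∑ x, ∑ y, f x * A x y * f y := by
    simp only [Finset.mul_sum, ← Finset.sum_add_distrib, ← Finset.sum_sub_distrib]
    exact Finset.sum_congr rfl fun x _ => Finset.sum_congr rfl fun y _ => by ring
  have hdiag : ∑ x, f x * (∑ y, A x y) * f x = ∑ x, ∑ y, A x y * f x ^ 2 :=
    Finset.sum_congr rfl fun x _ => by
      rw [Finset.mul_sum, Finset.sum_mul]
      exact Finset.sum_congr rfl fun y _ => by ring
  rw [hexpand, hswap, sub_mulVec, dotProduct_sub, dotProduct_mulVec_eq_sum_sum,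
    dotProduct_mulVec_eq_sum_sum]
  simp only [diagonal_apply, mul_ite, ite_mul, mul_zero, zero_mul, Finset.sum_ite_eq,
    Finset.mem_univ, if_true]
  rw [hdiag]
  ring

namespace IsCenteredGaussianField

variable {ι : Type*} [Fintype ι] {Ω : Type*} [MeasurableSpace Ω] {P : Measure Ω}
  {ψ : Ω → ι → ℝ} {C : Matrix ι ι ℝ}

lemma map_dotProduct (hG : IsCenteredGaussianField P ψ C) (a : ι → ℝ) :
    P.map (fun ω => a ⬝ᵥ ψ ω) = gaussianReal 0 (a ⬝ᵥ C *ᵥ a).toNNReal := by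
  rw [Matrix.dotProduct_mulVec_eq_sum_sum]
  exact hG a

variable (hG : IsCenteredGaussianField P ψ C) (hψ : Measurable ψ)
include hG hψ

lemma memLp_dotProduct (a : ι → ℝ) : MemLp (fun ω => a ⬝ᵥ ψ ω) 2 P := by
  have hm : Measurable fun ω => a ⬝ᵥ ψ ω := by fun_prop
  have hmap : MemLp id 2 (P.map fun ω => a ⬝ᵥ ψ ω) := by
    rw [hG.map_dotProduct]
    exact memLp_id_gaussianReal' 2 ENNReal.ofNat_ne_top
  exact (memLp_map_measure_iff aestronglyMeasurable_id hm.aemeasurable).1 hmap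

lemma integral_dotProduct (a : ι → ℝ) : ∫ ω, a ⬝ᵥ ψ ω ∂P = 0 := by
  have hm : Measurable fun ω => a ⬝ᵥ ψ ω := by fun_prop
  have := integral_map (μ := P) (f := fun x : ℝ => x) hm.aemeasurable aestronglyMeasurable_id
  rw [← this, hG.map_dotProduct, integral_id_gaussianReal]

lemma integral_dotProduct_sq (hC : C.PosSemidef) (a : ι → ℝ) :
    ∫ ω, (a ⬝ᵥ ψ ω) ^ 2 ∂P = a ⬝ᵥ C *ᵥ a := by
  have hm : Measurable fun ω => a ⬝ᵥ ψ ω := by fun_prop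
  have := variance_map (μ := P) (X := id) aemeasurable_id hm.aemeasurable
  rw [Function.id_comp, hG.map_dotProduct, variance_id_gaussianReal,
    Real.coe_toNNReal _ (by simpa using hC.dotProduct_mulVec_nonneg a)] at this
  rw [← variance_of_integral_eq_zero hm.aemeasurable (hG.integral_dotProduct hψ a), this]

lemma integrable_dotProduct_mul_dotProduct (a b : ι → ℝ) :
    Integrable (fun ω => (a ⬝ᵥ ψ ω) * (b ⬝ᵥ ψ ω)) P :=
  (hG.memLp_dotProduct hψ a).integrable_mul (hG.memLp_dotProduct hψ b)

lemma integral_dotProduct_mul_dotProduct (hC : C.PosSemidef) (a b : ι → ℝ) :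
    ∫ ω, (a ⬝ᵥ ψ ω) * (b ⬝ᵥ ψ ω) ∂P = a ⬝ᵥ C *ᵥ b := by
  have hsymm : b ⬝ᵥ C *ᵥ a = a ⬝ᵥ C *ᵥ b := by
    rw [← dotProduct_transpose_mulVec, (isHermitian_iff_isSymm.1 hC.isHermitian).eq]
  have hsq (c : ι → ℝ) : Integrable (fun ω => (c ⬝ᵥ ψ ω) ^ 2) P :=
    (hG.memLp_dotProduct hψ c).integrable_sq
  have hab := (hG.integrable_dotProduct_mul_dotProduct hψ a b).const_mul 2
  have hpolar : ∫ ω, ((a + b) ⬝ᵥ ψ ω) ^ 2 ∂P = ∫ ω, (a ⬝ᵥ ψ ω) ^ 2 ∂P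
      + 2 * ∫ ω, (a ⬝ᵥ ψ ω) * (b ⬝ᵥ ψ ω) ∂P + ∫ ω, (b ⬝ᵥ ψ ω) ^ 2 ∂P := by
    have hpt : (fun ω => ((a + b) ⬝ᵥ ψ ω) ^ 2)
        = fun ω => ((a ⬝ᵥ ψ ω) ^ 2 + 2 * ((a ⬝ᵥ ψ ω) * (b ⬝ᵥ ψ ω))) + (b ⬝ᵥ ψ ω) ^ 2 := by
      ext ω
      rw [add_dotProduct]
      ring
    rw [hpt, integral_add _ (hsq b), integral_add (hsq a) hab, integral_const_mul]
    exact (hsq a).add hab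
  rw [hG.integral_dotProduct_sq hψ hC, hG.integral_dotProduct_sq hψ hC,
    hG.integral_dotProduct_sq hψ hC, mulVec_add, dotProduct_add, add_dotProduct,
    add_dotProduct, hsymm] at hpolar
  linarith

lemma integrable_dotProduct_mulVec [DecidableEq ι] (M : Matrix ι ι ℝ) :
    Integrable (fun ω => ψ ω ⬝ᵥ M *ᵥ ψ ω) P := by
  simp_rw [dotProduct_mulVec_self_eq_sum]
  exact integrable_finsetSum _ fun x _ =>
    hG.integrable_dotProduct_mul_dotProduct hψ (Pi.single x 1) (M x)

lemma integral_dotProduct_mulVec [DecidableEq ι] (hC : C.PosSemidef) (M : Matrix ι ι ℝ) :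
    ∫ ω, ψ ω ⬝ᵥ M *ᵥ ψ ω ∂P = (M * C).trace := by
  simp_rw [dotProduct_mulVec_self_eq_sum]
  rw [integral_finsetSum _ fun x _ =>
    hG.integrable_dotProduct_mul_dotProduct hψ (Pi.single x 1) (M x),
    Finset.sum_congr rfl fun x _ =>
    hG.integral_dotProduct_mul_dotProduct hψ hC (Pi.single x 1) (M x)]
  simp only [single_one_dotProduct]
  simp only [trace, diag, mul_apply, mulVec, dotProduct]
  refine Finset.sum_congr rfl fun x _ => Finset.sum_congr rfl fun y _ => ?_
  rw [(isHermitian_iff_isSymm.1 hC.isHermitian).apply y x, mul_comm]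

end IsCenteredGaussianField

section SampleWiseGate

variable {ι : Type*} [Fintype ι] (γ : ℝ) (φ : ι → ℝ)

lemma sum_exp_div_card_pos [Nonempty ι] : 0 < (∑ y, Real.exp (γ * φ y)) / (Fintype.card ι : ℝ) :=
  div_pos (Finset.sum_pos (fun _ _ => Real.exp_pos _) Finset.univ_nonempty)
    (Nat.cast_pos.2 Fintype.card_pos)

lemma swGate_pos (x : ι) : 0 < swGate γ φ x :=
  have : Nonempty ι := ⟨x⟩
  div_pos (Real.exp_pos _) (sum_exp_div_card_pos γ φ)

lemma log_swGate (x : ι) :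
    Real.log (swGate γ φ x) = γ * φ x - Real.log ((∑ y, Real.exp (γ * φ y)) / Fintype.card ι) :=
  have : Nonempty ι := ⟨x⟩
  by rw [swGate, Real.log_div (Real.exp_ne_zero _) (sum_exp_div_card_pos γ φ).ne', Real.log_exp]

end SampleWiseGate

-- The neighbour offsets in the order used by `dirichletLap`.
def unitSteps : List (ℤ × ℤ) := [(1, 0), (-1, 0), (0, 1), (0, -1)]

lemma adjZ_iff (p q : ℤ × ℤ) : adjZ p q ↔ q - p ∈ unitSteps := by
  simp only [adjZ, beq_iff_eq, unitSteps, List.mem_cons, List.not_mem_nil, or_false,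
    Prod.ext_iff, Prod.fst_sub, Prod.snd_sub]
  rcases abs_cases (p.1 - q.1) with ⟨h1, _⟩ | ⟨h1, _⟩ <;>
    rcases abs_cases (p.2 - q.2) with ⟨h2, _⟩ | ⟨h2, _⟩ <;> rw [h1, h2] <;> omega

lemma adjZ_self (p : ℤ × ℤ) : adjZ p p = false := by
  simp [adjZ]

lemma adjZ_comm (p q : ℤ × ℤ) : adjZ p q = adjZ q p := by
  rw [adjZ, adjZ, abs_sub_comm p.1, abs_sub_comm p.2]

lemma sum_ite_adjZ_le {ι : Type*} [Fintype ι] {e : ι → ℤ × ℤ} (he : e.Injective) (p : ℤ × ℤ)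
    {f : ℤ × ℤ → ℝ} (hf : ∀ q, adjZ p q → 0 ≤ f q) :
    ∑ y, (if adjZ p (e y) then f (e y) else 0) ≤ (unitSteps.map fun d => f (p + d)).sum := by
  classical
  have hnodup : (unitSteps.map (p + ·)).Nodup :=
    (by decide : unitSteps.Nodup).map (add_right_injective p)
  calc ∑ y, (if adjZ p (e y) then f (e y) else 0)
      = ∑ q ∈ (Finset.univ.filter fun y => adjZ p (e y)).image e, f q := by
        rw [Finset.sum_image he.injOn, Finset.sum_filter]
    _ ≤ ∑ q ∈ (unitSteps.map (p + ·)).toFinset, f q := by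
        refine Finset.sum_le_sum_of_subset_of_nonneg ?_ fun q hq _ => hf q ?_
        · intro q hq
          simp only [Finset.mem_image, Finset.mem_filter] at hq
          obtain ⟨y, ⟨-, hy⟩, rfl⟩ := hq
          exact List.mem_toFinset.2
            (List.mem_map.2 ⟨_, (adjZ_iff p (e y)).1 hy, add_sub_cancel p _⟩)
        · obtain ⟨d, hd, rfl⟩ := List.mem_map.1 (List.mem_toFinset.1 hq)
          rwa [adjZ_iff, add_sub_cancel_left]
    _ = (unitSteps.map fun d => f (p + d)).sum := by
        rw [List.sum_toFinset _ hnodup, List.map_map]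
        rfl

lemma gridZ_injective {H W : ℕ} : Function.Injective (gridZ (H := H) (W := W)) := by
  intro a b hab
  simp only [gridZ, Prod.mk.injEq, add_left_inj, Nat.cast_inj, Fin.val_inj] at hab
  exact Prod.ext hab.1 hab.2

def adjWeight (H W : ℕ) (c : ℤ × ℤ → ℤ × ℤ → ℝ) : Matrix (GridPt H W) (GridPt H W) ℝ :=
  fun x y => if adjZ (gridZ x) (gridZ y) then c (gridZ x) (gridZ y) else 0

section IntrinsicLaplacian

variable {H W : ℕ} (c : ℤ × ℤ → ℤ × ℤ → ℝ)

lemma adjWeight_isSymm (hsym : ∀ p q : ℤ × ℤ, c p q = c q p) : (adjWeight H W c).IsSymm :=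
  Matrix.IsSymm.ext fun x y => by rw [adjWeight, adjWeight, adjZ_comm, hsym]

lemma Lint_eq_diagonal_sub_adjWeight :
    Lint H W c = diagonal (fun x => ∑ y, adjWeight H W c x y) - adjWeight H W c := by
  ext x y
  by_cases hxy : x = y
  · subst hxy
    simp [Lint, dInt, adjWeight, adjZ_self]
  · rw [Matrix.sub_apply, diagonal_apply_ne _ hxy, zero_sub, Lint, if_neg hxy, adjWeight]
    split_ifs <;> simp

lemma Lint_isSymm (hsym : ∀ p q : ℤ × ℤ, c p q = c q p) : (Lint H W c).IsSymm := by
  rw [Lint_eq_diagonal_sub_adjWeight]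
  exact (isSymm_diagonal _).sub (adjWeight_isSymm c hsym)

lemma Eint_eq_half_dotProduct_Lint (hsym : ∀ p q : ℤ × ℤ, c p q = c q p) (f : GridPt H W → ℝ) :
    Eint c f = (1 / 2) * (f ⬝ᵥ Lint H W c *ᵥ f) := by
  have hE : Eint c f = (1 / 4) * ∑ x, ∑ y, adjWeight H W c x y * (f x - f y) ^ 2 := by
    simp only [Eint, adjWeight, ite_mul, zero_mul]
  rw [hE, sum_sum_mul_sub_sq (adjWeight_isSymm c hsym), Lint_eq_diagonal_sub_adjWeight]
  ring

lemma Eint_nonneg (hpos : ∀ p q : ℤ × ℤ, adjZ p q → 0 < c p q) (f : GridPt H W → ℝ) :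
    0 ≤ Eint c f := by
  unfold Eint
  refine mul_nonneg (by norm_num) (Finset.sum_nonneg fun x _ => Finset.sum_nonneg fun y _ => ?_)
  split_ifs with hxy
  · exact mul_nonneg (hpos _ _ hxy).le (sq_nonneg _)
  · exact le_rfl

lemma posSemidef_Lint (hsym : ∀ p q : ℤ × ℤ, c p q = c q p)
    (hpos : ∀ p q : ℤ × ℤ, adjZ p q → 0 < c p q) : (Lint H W c).PosSemidef := by
  refine .of_dotProduct_mulVec_nonneg (isHermitian_iff_isSymm.2 (Lint_isSymm c hsym)) fun f => ?_
  have := Eint_nonneg c hpos f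
  rw [Eint_eq_half_dotProduct_Lint c hsym] at this
  simpa using this

lemma Eint_sub_const (f : GridPt H W → ℝ) (t : ℝ) : Eint c (fun x => f x - t) = Eint c f := by
  simp only [Eint, sub_sub_sub_cancel_right]

lemma Eint_add_smul (hsym : ∀ p q : ℤ × ℤ, c p q = c q p) (f g : GridPt H W → ℝ) (γ : ℝ) :
    Eint c (f + γ • g) = Eint c f + γ ^ 2 * Eint c g + γ * (f ⬝ᵥ Lint H W c *ᵥ g) := by
  have hcomm : g ⬝ᵥ Lint H W c *ᵥ f = f ⬝ᵥ Lint H W c *ᵥ g := by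
    rw [← dotProduct_transpose_mulVec, (Lint_isSymm c hsym).eq]
  simp only [Eint_eq_half_dotProduct_Lint c hsym, mulVec_add, mulVec_smul, dotProduct_add,
    add_dotProduct, dotProduct_smul, smul_dotProduct, smul_eq_mul, hcomm]
  ring

lemma Eint_log_swGate_mul {h : GridPt H W → ℝ} (hh : ∀ x, 0 < h x) (γ : ℝ)
    (φ : GridPt H W → ℝ) :
    Eint c (fun x => Real.log (swGate γ φ x * h x)) =
      Eint c ((fun x => Real.log (h x)) + γ • φ) := by
  rw [← Eint_sub_const c ((fun x => Real.log (h x)) + γ • φ)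
    (Real.log ((∑ y, Real.exp (γ * φ y)) / Fintype.card (GridPt H W)))]
  congr 1 with x
  rw [Real.log_mul (swGate_pos γ φ x).ne' (hh x).ne', log_swGate, Pi.add_apply, Pi.smul_apply,
    smul_eq_mul]
  ring

end IntrinsicLaplacian

lemma dInt_le_dirichletLap_diag {H W : ℕ} {c : ℤ × ℤ → ℤ × ℤ → ℝ}
    (hpos : ∀ p q : ℤ × ℤ, adjZ p q → 0 < c p q) (x : GridPt H W) :
    dInt c x ≤ dirichletLap H W c x x := by
  rw [dirichletLap, if_pos rfl]
  exact sum_ite_adjZ_le gridZ_injective _ fun q hq => (hpos _ q hq).le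

lemma dirichletLap_eq_Lint_add_diagonal {H W : ℕ} (c : ℤ × ℤ → ℤ × ℤ → ℝ) :
    dirichletLap H W c =
      Lint H W c + diagonal (fun x => dirichletLap H W c x x - dInt c x) := by
  ext x y
  by_cases hxy : x = y
  · subst hxy
    simp [Lint]
  · simp [dirichletLap, Lint, hxy]

lemma posSemidef_dirichletLap {H W : ℕ} {c : ℤ × ℤ → ℤ × ℤ → ℝ}
    (hsym : ∀ p q : ℤ × ℤ, c p q = c q p) (hpos : ∀ p q : ℤ × ℤ, adjZ p q → 0 < c p q) :
    (dirichletLap H W c).PosSemidef := by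
  rw [dirichletLap_eq_Lint_add_diagonal]
  exact (posSemidef_Lint c hsym hpos).add
    (.diagonal fun x => sub_nonneg.2 (dInt_le_dirichletLap_diag hpos x))

/-- Exact expected intrinsic roughness budget for the sample-wise gate:
`𝔼[𝓔_int(log h̃)] = 𝓔_int(log h) + γ² ε_int` with
`ε_int = 𝔼[𝓔_int(ψ)] = (1/2) Tr(L_int C)`. -/
theorem samplewise_gate_intrinsic_budget {H W : ℕ}
    (c : ℤ × ℤ → ℤ × ℤ → ℝ)
    (hsym : ∀ p q : ℤ × ℤ, c p q = c q p)
    (hpos : ∀ p q : ℤ × ℤ, adjZ p q → 0 < c p q)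
    (β : ℝ) (hβ : 0 < β) (γ : ℝ)
    {Ω : Type*} [MeasurableSpace Ω] (P : Measure Ω) [IsProbabilityMeasure P]
    (ψ : Ω → GridPt H W → ℝ) (hψ : Measurable ψ)
    (hgauss : IsCenteredGaussianField P ψ (β⁻¹ • (dirichletLap H W c)⁻¹))
    (h : GridPt H W → ℝ) (hh : ∀ x, 0 < h x) :
    (∫ ω, Eint c (fun x => Real.log (swGate γ (ψ ω) x * h x)) ∂P) =
      Eint c (fun x => Real.log (h x)) + γ ^ 2 * (∫ ω, Eint c (ψ ω) ∂P) ∧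
    (∫ ω, Eint c (ψ ω) ∂P) =
      (1 / 2) * Matrix.trace (Lint H W c * (β⁻¹ • (dirichletLap H W c)⁻¹)) := by
  have hC : (β⁻¹ • (dirichletLap H W c)⁻¹).PosSemidef :=
    (posSemidef_dirichletLap hsym hpos).inv.smul (inv_nonneg.2 hβ.le)
  have hEψ (ω : Ω) : Eint c (ψ ω) = (1 / 2) * (ψ ω ⬝ᵥ Lint H W c *ᵥ ψ ω) :=
    Eint_eq_half_dotProduct_Lint c hsym (ψ ω)
  have hEψ_int : Integrable (fun ω => Eint c (ψ ω)) P := by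
    simp_rw [hEψ]
    exact (hgauss.integrable_dotProduct_mulVec hψ _).const_mul _
  have hdecomp (ω : Ω) : Eint c (fun x => Real.log (swGate γ (ψ ω) x * h x)) =
      Eint c (fun x => Real.log (h x)) + γ ^ 2 * Eint c (ψ ω)
        + γ * (((fun x => Real.log (h x)) ᵥ* Lint H W c) ⬝ᵥ ψ ω) := by
    rw [Eint_log_swGate_mul c hh, Eint_add_smul c hsym, dotProduct_mulVec]
  refine ⟨?_, ?_⟩
  · have hcross_int := ((hgauss.memLp_dotProduct hψ
      ((fun x => Real.log (h x)) ᵥ* Lint H W c)).integrable one_le_two).const_mul γ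
    simp_rw [hdecomp]
    rw [integral_add _ hcross_int, integral_add (integrable_const _) (hEψ_int.const_mul _),
      integral_const, integral_const_mul, integral_const_mul, hgauss.integral_dotProduct hψ]
    · simp
    · exact (integrable_const _).add (hEψ_int.const_mul _)
  · simp_rw [hEψ]
    rw [integral_const_mul, hgauss.integral_dotProduct_mulVec hψ hC]
end
end

section
/- Let m_q(x) = b(x)/q with i.i.d. b(x) ~ Bernoulli(q), q∈(0,1], on the grid U. Then for every deterministic field h:U→ℝ, the expected intrinsic energy after masking satisfies exactly 𝔼[𝓔_int(m_q ⊙ h)] = 𝓔_int(h) + ((1−q)/(2q))·Σ_{x∈U} d_x^int · h(x)², where d_x^int = Σ_{y:{x,y}∈E_int} c_{xy} is the intrinsic weighted degree of x. -/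
/-!
Expanding the square, `(m x * a - m y * b) ^ 2 = a² m x² - 2ab m x m y + b² m y²`. Distinct mask
coordinates are independent with `𝔼 m = 1` and `𝔼 m² = 1/q`, so every edge term gains exactly
`(1/q - 1)(a² + b²)`; by symmetry of the weights, summing these over ordered pairs gives twice the
degree-weighted sum `∑ₓ dₓ h(x)²`.
-/

open MeasureTheory Real

noncomputable section
/-- Inverted-dropout mask `m_q(x) = b(x)/q` built from a Boolean keep pattern `ω`. -/
def maskD {ι : Type*} (q : ℝ) (ω : ι → Bool) (x : ι) : ℝ :=
  (if ω x then (1 : ℝ) else 0) / q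

/-- The law of i.i.d. `Bernoulli(q)` keep variables indexed by `ι`
(the canonical product measure, i.e. i.i.d. coordinates). -/
def bernoulliPi (ι : Type*) [Fintype ι] (q : ℝ) (hq : q ≤ 1) :
    MeasureTheory.Measure (ι → Bool) :=
  MeasureTheory.Measure.pi fun _ =>
    (PMF.bernoulli (Real.toNNReal q) (Real.toNNReal_le_one.mpr hq)).toMeasure

open ProbabilityTheory

lemma integral_comp_eval_mul_comp_eval {ι : Type*} [Fintype ι] {X : ι → Type*}
    [∀ i, MeasurableSpace (X i)] {μ : (i : ι) → Measure (X i)}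
    [∀ i, IsProbabilityMeasure (μ i)] {i j : ι} (hij : i ≠ j) {f : X i → ℝ} {g : X j → ℝ}
    (hf : Measurable f) (hg : Measurable g) :
    ∫ x, f (x i) * g (x j) ∂Measure.pi μ = (∫ a, f a ∂μ i) * ∫ b, g b ∂μ j := by
  have hindep : IndepFun (fun x : (k : ι) → X k ↦ f (x i)) (fun x ↦ g (x j)) (Measure.pi μ) :=
    ((iIndepFun_pi (X := fun _ ↦ id) fun _ ↦ aemeasurable_id).indepFun hij).comp hf hg
  rw [hindep.integral_fun_mul_eq_mul_integral
    (hf.comp (measurable_pi_apply i)).aestronglyMeasurable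
    (hg.comp (measurable_pi_apply j)).aestronglyMeasurable,
    integral_comp_eval hf.aestronglyMeasurable, integral_comp_eval hg.aestronglyMeasurable]

lemma integral_bernoulli_toNNReal {q : ℝ} (hq0 : 0 ≤ q) (hq1 : q ≤ 1) (g : Bool → ℝ) :
    ∫ b, g b ∂(PMF.bernoulli q.toNNReal (Real.toNNReal_le_one.mpr hq1)).toMeasure
      = q * g true + (1 - q) * g false := by
  rw [PMF.integral_eq_sum, Fintype.sum_bool]
  simp [PMF.bernoulli_apply, Real.coe_toNNReal _ hq0, hq1]

section Dropout

variable {ι : Type*} [Fintype ι] {q : ℝ} {hq1 : q ≤ 1}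

instance : IsProbabilityMeasure (bernoulliPi ι q hq1) := by
  unfold bernoulliPi
  infer_instance

lemma integral_comp_eval_bernoulliPi (hq0 : 0 ≤ q) (x : ι) (g : Bool → ℝ) :
    ∫ ω, g (ω x) ∂bernoulliPi ι q hq1 = q * g true + (1 - q) * g false := by
  rw [bernoulliPi, integral_comp_eval (Measurable.of_discrete).aestronglyMeasurable,
    integral_bernoulli_toNNReal hq0 hq1]

lemma integral_comp_eval_mul_comp_eval_bernoulliPi (hq0 : 0 ≤ q) {x y : ι} (hxy : x ≠ y)
    (g g' : Bool → ℝ) :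
    ∫ ω, g (ω x) * g' (ω y) ∂bernoulliPi ι q hq1
      = (q * g true + (1 - q) * g false) * (q * g' true + (1 - q) * g' false) := by
  rw [bernoulliPi, integral_comp_eval_mul_comp_eval hxy .of_discrete .of_discrete,
    integral_bernoulli_toNNReal hq0 hq1, integral_bernoulli_toNNReal hq0 hq1]

lemma integral_maskD_sq (hq0 : 0 < q) (x : ι) :
    ∫ ω, maskD q ω x ^ 2 ∂bernoulliPi ι q hq1 = q⁻¹ := by
  simp only [maskD]
  rw [integral_comp_eval_bernoulliPi (g := fun b ↦ ((if b then (1 : ℝ) else 0) / q) ^ 2) hq0.le]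
  field_simp
  simp

lemma integral_maskD_mul_maskD (hq0 : 0 < q) {x y : ι} (hxy : x ≠ y) :
    ∫ ω, maskD q ω x * maskD q ω y ∂bernoulliPi ι q hq1 = 1 := by
  simp only [maskD]
  rw [integral_comp_eval_mul_comp_eval_bernoulliPi (g := fun b ↦ (if b then (1 : ℝ) else 0) / q)
    (g' := fun b ↦ (if b then (1 : ℝ) else 0) / q) hq0.le hxy]
  field_simp
  simp

lemma integral_sq_maskD_mul_sub_maskD_mul (hq0 : 0 < q) {x y : ι} (hxy : x ≠ y) (a b : ℝ) :
    ∫ ω, (maskD q ω x * a - maskD q ω y * b) ^ 2 ∂bernoulliPi ι q hq1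
      = (a - b) ^ 2 + (q⁻¹ - 1) * (a ^ 2 + b ^ 2) := by
  have hexpand : ∀ ω : ι → Bool, (maskD q ω x * a - maskD q ω y * b) ^ 2
      = a ^ 2 * maskD q ω x ^ 2 - 2 * a * b * (maskD q ω x * maskD q ω y)
        + b ^ 2 * maskD q ω y ^ 2 := fun ω ↦ by ring
  simp_rw [hexpand]
  rw [integral_add .of_finite .of_finite, integral_sub .of_finite .of_finite,
    integral_const_mul, integral_const_mul, integral_const_mul, integral_maskD_sq hq0,
    integral_maskD_sq hq0, integral_maskD_mul_maskD hq0 hxy]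
  ring

lemma sum_sum_mul_sq_add_sq {w : ι → ι → ℝ} (hw : ∀ x y, w x y = w y x) (f : ι → ℝ) :
    ∑ x, ∑ y, w x y * (f x ^ 2 + f y ^ 2) = 2 * ∑ x, (∑ y, w x y) * f x ^ 2 := by
  have hswap : ∑ x, ∑ y, w x y * f y ^ 2 = ∑ x, ∑ y, w x y * f x ^ 2 := by
    rw [Finset.sum_comm]
    simp_rw [hw]
  simp_rw [mul_add, Finset.sum_add_distrib, hswap, Finset.sum_mul]
  ring

theorem integral_sum_sum_mul_sq_maskD_mul_sub (hq0 : 0 < q) {w : ι → ι → ℝ}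
    (hw_comm : ∀ x y, w x y = w y x) (hw_self : ∀ x, w x x = 0) (f : ι → ℝ) :
    ∫ ω, ∑ x, ∑ y, w x y * (maskD q ω x * f x - maskD q ω y * f y) ^ 2
        ∂bernoulliPi ι q hq1
      = ∑ x, ∑ y, w x y * (f x - f y) ^ 2
        + 2 * (q⁻¹ - 1) * ∑ x, (∑ y, w x y) * f x ^ 2 := by
  have hpair : ∀ x y, w x y * ∫ ω, (maskD q ω x * f x - maskD q ω y * f y) ^ 2
      ∂bernoulliPi ι q hq1 = w x y * ((f x - f y) ^ 2 + (q⁻¹ - 1) * (f x ^ 2 + f y ^ 2)) := by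
    intro x y
    rcases eq_or_ne x y with rfl | hxy
    · simp [hw_self]
    · rw [integral_sq_maskD_mul_sub_maskD_mul hq0 hxy]
  simp_rw [integral_finset_sum _ fun _ _ ↦ Integrable.of_finite, integral_const_mul, hpair]
  have hsplit : ∑ x, ∑ y, w x y * ((f x - f y) ^ 2 + (q⁻¹ - 1) * (f x ^ 2 + f y ^ 2))
      = ∑ x, ∑ y, w x y * (f x - f y) ^ 2
        + (q⁻¹ - 1) * ∑ x, ∑ y, w x y * (f x ^ 2 + f y ^ 2) := by
    simp_rw [Finset.mul_sum, ← Finset.sum_add_distrib]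
    exact Finset.sum_congr rfl fun x _ ↦ Finset.sum_congr rfl fun y _ ↦ by ring
  rw [hsplit, sum_sum_mul_sq_add_sq hw_comm]
  ring

end Dropout

section Grid

variable {H W : ℕ} (c : ℤ × ℤ → ℤ × ℤ → ℝ)

def intWeight (x y : GridPt H W) : ℝ :=
  if adjZ (gridZ x) (gridZ y) then c (gridZ x) (gridZ y) else 0

lemma Eint_eq_sum_intWeight (f : GridPt H W → ℝ) :
    Eint c f = 1 / 4 * ∑ x, ∑ y, intWeight c x y * (f x - f y) ^ 2 := by
  simp only [Eint, intWeight, ite_mul, zero_mul]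

lemma dInt_eq_sum_intWeight (x : GridPt H W) : dInt c x = ∑ y, intWeight c x y := rfl

lemma intWeight_self (x : GridPt H W) : intWeight c x x = 0 := by
  simp [intWeight, adjZ]

variable {c}

lemma intWeight_comm (hsym : ∀ p q, c p q = c q p) (x y : GridPt H W) :
    intWeight c x y = intWeight c y x := by
  rw [intWeight, intWeight, adjZ, adjZ, abs_sub_comm (gridZ x).1, abs_sub_comm (gridZ x).2,
    hsym (gridZ x)]

end Grid

theorem dropout_intrinsic_energy_inflation_general {H W : ℕ}
    (c : ℤ × ℤ → ℤ × ℤ → ℝ)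
    (hsym : ∀ p q : ℤ × ℤ, c p q = c q p)
    (q : ℝ) (hq0 : 0 < q) (hq1 : q ≤ 1) (h : GridPt H W → ℝ) :
    (∫ ω, Eint c (fun x => maskD q ω x * h x) ∂(bernoulliPi (GridPt H W) q hq1)) =
      Eint c h + ((1 - q) / (2 * q)) * ∑ x : GridPt H W, dInt c x * (h x) ^ 2 := by
  simp_rw [Eint_eq_sum_intWeight, dInt_eq_sum_intWeight]
  rw [integral_const_mul, integral_sum_sum_mul_sq_maskD_mul_sub hq0 (intWeight_comm hsym)
    (intWeight_self c)]
  field_simp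
  ring

/-- Exact intrinsic energy inflation under inverted dropout: for every
deterministic field `h`,
`𝔼[𝓔_int(m_q ⊙ h)] = 𝓔_int(h) + ((1−q)/(2q)) ∑_x d_x^int h(x)²`. -/
theorem dropout_intrinsic_energy_inflation {H W : ℕ}
    (c : ℤ × ℤ → ℤ × ℤ → ℝ)
    (hsym : ∀ p q : ℤ × ℤ, c p q = c q p)
    (hpos : ∀ p q : ℤ × ℤ, adjZ p q → 0 < c p q)
    (q : ℝ) (hq0 : 0 < q) (hq1 : q ≤ 1) (h : GridPt H W → ℝ) :
    (∫ ω, Eint c (fun x => maskD q ω x * h x) ∂(bernoulliPi (GridPt H W) q hq1)) =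
      Eint c h + ((1 - q) / (2 * q)) * ∑ x : GridPt H W, dInt c x * (h x) ^ 2 :=
  dropout_intrinsic_energy_inflation_general c hsym q hq0 hq1 h

end
end

section
/- Fix distinct sites x≠y in the grid U with τ·R_G(x,y) > 0, where τ = γ²/β and R_G(x,y) = G_U(x,x)+G_U(y,y)−2G_U(x,y). Let (h_ℓ)_{ℓ≥1} be positive fields on U with h_ℓ(x) > h_ℓ(y) for every ℓ, and set δ_ℓ = log h_ℓ(x) − log h_ℓ(y). If δ_ℓ/√(τR_G(x,y)) → ∞, then under the sample-wise GCh gate, Pr(h̃_ℓ(x) > h̃_ℓ(y)) → 1 as ℓ → ∞, where h̃_ℓ = ξ^sw_γ ⊙ h_ℓ; whereas under inverted dropout with keep probability q, Pr((m_q ⊙ h_ℓ)(x) > (m_q ⊙ h_ℓ)(y)) = q for every ℓ. -/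
open MeasureTheory Matrix Real Filter

noncomputable section
/-! The sample-wise gate divides every site by the same normaliser, so the gated order at
`(x, y)` only sees the increment `γ (ψ x − ψ y)`: it holds iff this increment exceeds `−δ_ℓ`.
The increment is a centred Gaussian of variance `τ R_G(x,y)`, so the probability tends to one
once `δ_ℓ → ∞`. Inverted dropout rescales kept sites by the same `1/q`, so with
`0 < h(y) < h(x)` the masked order holds exactly when `x` is kept. -/

section Increment

variable {ι : Type*} [Fintype ι] [DecidableEq ι]

lemma sum_single_sub_single_mul (x y : ι) (γ : ℝ) (g : ι → ℝ) :
    ∑ z, (Pi.single x γ - Pi.single y γ : ι → ℝ) z * g z = γ * (g x - g y) := by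
  simp only [Pi.sub_apply, sub_mul, Finset.sum_sub_distrib, Pi.single_apply, ite_mul,
    zero_mul, Finset.sum_ite_eq', Finset.mem_univ, if_true]
  ring

lemma quadForm_single_sub_single {C : Matrix ι ι ℝ} (hC : C.IsSymm) (x y : ι) (γ : ℝ) :
    ∑ i, ∑ j, (Pi.single x γ - Pi.single y γ : ι → ℝ) i * C i j *
        (Pi.single x γ - Pi.single y γ : ι → ℝ) j =
      γ ^ 2 * (C x x + C y y - 2 * C x y) := by
  simp_rw [mul_assoc, ← Finset.mul_sum, mul_comm (C _ _), sum_single_sub_single_mul]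
  rw [hC.apply x y]
  ring

lemma IsCenteredGaussianField.map_increment {Ω : Type*} [MeasurableSpace Ω] {P : Measure Ω}
    {ψ : Ω → ι → ℝ} {C : Matrix ι ι ℝ} (hψ : IsCenteredGaussianField P ψ C) (hC : C.IsSymm)
    (x y : ι) (γ : ℝ) :
    P.map (fun ω => γ * (ψ ω x - ψ ω y)) =
      ProbabilityTheory.gaussianReal 0 (γ ^ 2 * (C x x + C y y - 2 * C x y)).toNNReal := by
  have h := hψ (Pi.single x γ - Pi.single y γ)
  simp_rw [sum_single_sub_single_mul, quadForm_single_sub_single hC] at h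
  exact h

end Increment

lemma dirichletLap_isSymm {H W : ℕ} {c : ℤ × ℤ → ℤ × ℤ → ℝ}
    (hsym : ∀ p q : ℤ × ℤ, c p q = c q p) : (dirichletLap H W c).IsSymm := by
  ext i j
  simp only [Matrix.transpose_apply, dirichletLap]
  by_cases h : i = j
  · subst h; rfl
  · have hadj : adjZ (gridZ j) (gridZ i) = adjZ (gridZ i) (gridZ j) := by
      simp only [adjZ, abs_sub_comm (gridZ j).1, abs_sub_comm (gridZ j).2]
    rw [if_neg h, if_neg (Ne.symm h), hadj, hsym]

lemma swGate_mul_lt_swGate_mul_iff {ι : Type*} [Fintype ι] [Nonempty ι] (γ : ℝ)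
    (ψ : ι → ℝ) {h : ι → ℝ} {x y : ι} (hx : 0 < h x) (hy : 0 < h y) :
    swGate γ ψ y * h y < swGate γ ψ x * h x ↔
      -(Real.log (h x) - Real.log (h y)) < γ * (ψ x - ψ y) := by
  have hZ : 0 < (∑ z, Real.exp (γ * ψ z)) / (Fintype.card ι : ℝ) := by positivity
  have hexp : ∀ z, 0 < h z → Real.exp (γ * ψ z) * h z = Real.exp (γ * ψ z + Real.log (h z)) :=
    fun z hz => by rw [Real.exp_add, Real.exp_log hz]
  rw [swGate, swGate, div_mul_eq_mul_div, div_mul_eq_mul_div, div_lt_div_iff_of_pos_right hZ,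
    hexp x hx, hexp y hy, Real.exp_lt_exp]
  constructor <;> intro h <;> linarith

lemma tendsto_measure_Ioi_of_tendsto_atBot {α : Type*} {l : Filter α} (μ : Measure ℝ)
    [IsProbabilityMeasure μ] {t : α → ℝ} (ht : Tendsto t l atBot) :
    Tendsto (fun a => μ (Set.Ioi (t a))) l (nhds 1) := by
  have hIci : Tendsto (fun a => μ (Set.Ici (t a + 1))) l (nhds 1) := by
    have h := (tendsto_measure_Ici_atBot μ).comp (tendsto_atBot_add_const_right _ 1 ht)
    rwa [measure_univ] at h
  refine tendsto_of_tendsto_of_tendsto_of_le_of_le hIci tendsto_const_nhds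
    (fun a => measure_mono fun z hz => ?_) (fun _ => prob_le_one)
  simp only [Set.mem_Ici, Set.mem_Ioi] at hz ⊢
  linarith

lemma maskD_mul_lt_maskD_mul_iff {ι : Type*} {q : ℝ} (hq : 0 < q) (ω : ι → Bool)
    {h : ι → ℝ} {x y : ι} (hy : 0 < h y) (hyx : h y < h x) :
    maskD q ω y * h y < maskD q ω x * h x ↔ ω x = true := by
  have hq' : 0 < q⁻¹ := inv_pos.mpr hq
  cases hωx : ω x <;> cases hωy : ω y <;> simp [maskD, hωx, hωy] <;> nlinarith

lemma bernoulliPi_apply_eq_true {ι : Type*} [Fintype ι] {q : ℝ} (hq : q ≤ 1) (x : ι) :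
    bernoulliPi ι q hq {ω | ω x = true} = ENNReal.ofReal q := by
  rw [show {ω : ι → Bool | ω x = true} = Function.eval x ⁻¹' ({true} : Set Bool) from rfl,
    bernoulliPi,
    (measurePreserving_eval _ x).measure_preimage (measurableSet_singleton true).nullMeasurableSet,
    PMF.toMeasure_apply_singleton _ _ (measurableSet_singleton true)]
  rfl

theorem margin_growth_gch_vs_dropout_general {H W : ℕ}
    (c : ℤ × ℤ → ℤ × ℤ → ℝ)
    (hsym : ∀ p q : ℤ × ℤ, c p q = c q p)
    (β : ℝ) (γ : ℝ)
    {Ω : Type*} [MeasurableSpace Ω] (P : Measure Ω)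
    (ψ : Ω → GridPt H W → ℝ) (hψ : Measurable ψ)
    (hgauss : IsCenteredGaussianField P ψ (β⁻¹ • (dirichletLap H W c)⁻¹))
    (x y : GridPt H W)
    (hvar : 0 < (γ ^ 2 / β) *
      ((dirichletLap H W c)⁻¹ x x + (dirichletLap H W c)⁻¹ y y -
        2 * (dirichletLap H W c)⁻¹ x y))
    (hseq : ℕ → GridPt H W → ℝ) (hposf : ∀ (ℓ : ℕ) (z : GridPt H W), 0 < hseq ℓ z)
    (hgt : ∀ ℓ : ℕ, hseq ℓ y < hseq ℓ x)
    (hδ : Tendsto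
      (fun ℓ : ℕ => (Real.log (hseq ℓ x) - Real.log (hseq ℓ y)) /
        Real.sqrt ((γ ^ 2 / β) *
          ((dirichletLap H W c)⁻¹ x x + (dirichletLap H W c)⁻¹ y y -
            2 * (dirichletLap H W c)⁻¹ x y)))
      atTop atTop)
    (q : ℝ) (hq0 : 0 < q) (hq1 : q ≤ 1) :
    Tendsto
      (fun ℓ : ℕ =>
        (P {ω | swGate γ (ψ ω) y * hseq ℓ y < swGate γ (ψ ω) x * hseq ℓ x}).toReal)
      atTop (nhds 1) ∧
    (∀ ℓ : ℕ,
      bernoulliPi (GridPt H W) q hq1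
          {ω : GridPt H W → Bool | maskD q ω y * hseq ℓ y < maskD q ω x * hseq ℓ x} =
        ENNReal.ofReal q) := by
  have : Nonempty (GridPt H W) := ⟨x⟩
  set G := (dirichletLap H W c)⁻¹
  set μ := ProbabilityTheory.gaussianReal 0 ((γ ^ 2 / β) * (G x x + G y y - 2 * G x y)).toNNReal
  have hlaw : P.map (fun ω => γ * (ψ ω x - ψ ω y)) = μ := by
    rw [hgauss.map_increment (((dirichletLap_isSymm hsym).inv).smul β⁻¹)]
    simp only [Matrix.smul_apply, smul_eq_mul, μ]
    congr 2
    ring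
  have hmargin : Tendsto (fun ℓ => Real.log (hseq ℓ x) - Real.log (hseq ℓ y)) atTop atTop :=
    (tendsto_div_const_atTop_of_pos (Real.sqrt_pos.mpr hvar)).mp hδ
  refine ⟨?_, fun ℓ => ?_⟩
  · have hP : ∀ ℓ, P {ω | swGate γ (ψ ω) y * hseq ℓ y < swGate γ (ψ ω) x * hseq ℓ x} =
        μ (Set.Ioi (-(Real.log (hseq ℓ x) - Real.log (hseq ℓ y)))) := fun ℓ => by
      rw [← hlaw, Measure.map_apply (by fun_prop) measurableSet_Ioi]
      congr with ω
      exact swGate_mul_lt_swGate_mul_iff γ (ψ ω) (hposf ℓ x) (hposf ℓ y)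
    simp_rw [hP]
    exact (ENNReal.tendsto_toReal ENNReal.one_ne_top).comp
      (tendsto_measure_Ioi_of_tendsto_atBot μ (tendsto_neg_atTop_atBot.comp hmargin))
  · simp_rw [maskD_mul_lt_maskD_mul_iff hq0 _ (hposf ℓ y) (hgt ℓ)]
    exact bernoulliPi_apply_eq_true hq1 x

/-- Margin-growth regime: the sample-wise GCh gate strengthens while
inverted dropout saturates. If `δ_ℓ/√(τ R_G(x,y)) → ∞` where
`δ_ℓ = log h_ℓ(x) − log h_ℓ(y)`, `τ = γ²/β`, and `τ R_G(x,y) > 0`, then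
`Pr(h̃_ℓ(x) > h̃_ℓ(y)) → 1` under the sample-wise gate, whereas under inverted dropout
`Pr((m_q ⊙ h_ℓ)(x) > (m_q ⊙ h_ℓ)(y)) = q` for every `ℓ`. -/
theorem margin_growth_gch_vs_dropout {H W : ℕ}
    (c : ℤ × ℤ → ℤ × ℤ → ℝ)
    (hsym : ∀ p q : ℤ × ℤ, c p q = c q p)
    (hpos : ∀ p q : ℤ × ℤ, adjZ p q → 0 < c p q)
    (β : ℝ) (hβ : 0 < β) (γ : ℝ)
    {Ω : Type*} [MeasurableSpace Ω] (P : Measure Ω) [IsProbabilityMeasure P]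
    (ψ : Ω → GridPt H W → ℝ) (hψ : Measurable ψ)
    (hgauss : IsCenteredGaussianField P ψ (β⁻¹ • (dirichletLap H W c)⁻¹))
    (x y : GridPt H W) (hne : x ≠ y)
    (hvar : 0 < (γ ^ 2 / β) *
      ((dirichletLap H W c)⁻¹ x x + (dirichletLap H W c)⁻¹ y y -
        2 * (dirichletLap H W c)⁻¹ x y))
    (hseq : ℕ → GridPt H W → ℝ) (hposf : ∀ (ℓ : ℕ) (z : GridPt H W), 0 < hseq ℓ z)
    (hgt : ∀ ℓ : ℕ, hseq ℓ y < hseq ℓ x)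
    (hδ : Tendsto
      (fun ℓ : ℕ => (Real.log (hseq ℓ x) - Real.log (hseq ℓ y)) /
        Real.sqrt ((γ ^ 2 / β) *
          ((dirichletLap H W c)⁻¹ x x + (dirichletLap H W c)⁻¹ y y -
            2 * (dirichletLap H W c)⁻¹ x y)))
      atTop atTop)
    (q : ℝ) (hq0 : 0 < q) (hq1 : q ≤ 1) :
    Tendsto
      (fun ℓ : ℕ =>
        (P {ω | swGate γ (ψ ω) y * hseq ℓ y < swGate γ (ψ ω) x * hseq ℓ x}).toReal)
      atTop (nhds 1) ∧
    (∀ ℓ : ℕ,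
      bernoulliPi (GridPt H W) q hq1
          {ω : GridPt H W → Bool | maskD q ω y * hseq ℓ y < maskD q ω x * hseq ℓ x} =
        ENNReal.ofReal q) :=
  margin_growth_gch_vs_dropout_general c hsym β γ P ψ hψ hgauss x y hvar hseq hposf hgt hδ q hq0 hq1
end
end
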